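/- arXiv:1002.2935 — 8 statements merged into one kernel-verified Lean document; each statement's English description precedes it below -/
import Mathlib

section
/- Let G be a group and let X be a finite subset of G such that every element of X has finite order and every element of X has centraliser of finite index in G. Then the normal closure of the subgroup generated by X in G is finite. -/
/-!
The conjugates of `X` form a finite (orbit–stabiliser), conjugation-invariant set `Y` of elements
of finite order, and the normal closure of `X` is `H = ⟨Y⟩`. Every element of `Y` has finitely many
`H`-conjugates, so the centre of `H`, the intersection of their centralisers in `H`, has finite
index. A commutator in `H` only depends on the cosets of the centre, so `H` has finitely many
commutators and, by Schur's theorem, a finite derived subgroup. Finally `H / [H, H]` is a finitely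
generated abelian group generated by elements of finite order, hence finite.
-/

open Subgroup MulAction
open scoped commutatorElement

theorem Subgroup.finiteIndex_centralizer_iff_finite_conjugatesOf {G : Type*} [Group G] (x : G) :
    (centralizer {x}).FiniteIndex ↔ (conjugatesOf x).Finite := by
  have horbit : orbit (ConjAct G) x = conjugatesOf x :=
    Set.ext fun _ => ConjAct.mem_orbit_conjAct.trans isConj_comm
  rw [finiteIndex_iff_finite_quotient, ← horbit, ← Set.finite_coe_iff]
  exact ((orbitEquivQuotientStabilizer (ConjAct G) x).trans
    (quotientEquivOfEq (ConjAct.stabilizer_eq_centralizer x))).finite_iff.symm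

theorem commutatorElement_mul_of_mem_center {G : Type*} [Group G] (g h : G) {z w : G}
    (hz : z ∈ center G) (hw : w ∈ center G) : ⁅g * z, h * w⁆ = ⁅g, h⁆ := by
  have hconj : ∀ {c : G}, c ∈ center G → ∀ x, c * x * c⁻¹ = x := fun hc x =>
    mul_inv_eq_of_eq_mul (mem_center_iff.mp hc x).symm
  calc ⁅g * z, h * w⁆ = g * (z * (h * w) * z⁻¹) * g⁻¹ * (h * w)⁻¹ := by
        simp only [commutatorElement_def]; group
    _ = g * h * (w * g⁻¹ * w⁻¹) * h⁻¹ := by rw [hconj hz]; group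
    _ = ⁅g, h⁆ := by rw [hconj hw, commutatorElement_def]

theorem finite_commutatorSet_of_finiteIndex_center {G : Type*} [Group G]
    [(center G).FiniteIndex] : (commutatorSet G).Finite := by
  set T := Set.range (Quotient.out : G ⧸ center G → G)
  have hT : T.Finite := Set.finite_range (ι := G ⧸ center G) _
  have hcoset : ∀ g : G, ∃ t ∈ T, ∃ z ∈ center G, g = t * z := fun g => by
    obtain ⟨z, hz⟩ := QuotientGroup.mk_out_eq_mul (center G) g
    exact ⟨_, Set.mem_range_self _, z⁻¹, inv_mem z.2, by rw [hz, mul_inv_cancel_right]⟩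
  refine (hT.image2 (fun a b : G => ⁅a, b⁆) hT).subset ?_
  rintro _ ⟨g, h, rfl⟩
  obtain ⟨s, hs, z, hz, rfl⟩ := hcoset g
  obtain ⟨t, ht, w, hw, rfl⟩ := hcoset h
  exact ⟨s, hs, t, ht, (commutatorElement_mul_of_mem_center s t hz hw).symm⟩

theorem Subgroup.finiteIndex_center_of_closure_eq_top_of_conj_mem {G : Type*} [Group G]
    {S : Set G} (hS : closure S = ⊤) (hfin : S.Finite)
    (hconj : ∀ g : G, ∀ s ∈ S, g * s * g⁻¹ ∈ S) : (center G).FiniteIndex := by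
  have := hfin.to_subtype
  rw [center_eq_infi' hS]
  refine finiteIndex_iInf fun s => (finiteIndex_centralizer_iff_finite_conjugatesOf _).mpr ?_
  refine hfin.subset fun y hy => ?_
  obtain ⟨g, rfl⟩ := isConj_iff.mp hy
  exact hconj g s s.2

theorem CommGroup.finite_of_closure_eq_top_of_isOfFinOrder {A : Type*} [CommGroup A]
    {S : Set A} (hS : closure S = ⊤) (hfin : S.Finite) (htors : ∀ s ∈ S, IsOfFinOrder s) :
    Finite A := by
  have : Group.FG A := Group.fg_iff.mpr ⟨S, hS, hfin⟩
  refine CommGroup.finite_of_fg_isMulTorsion A fun a => ?_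
  have ha : a ∈ closure S := hS ▸ mem_top a
  induction ha using closure_induction with
  | mem s hs => exact htors s hs
  | one => exact IsOfFinOrder.one
  | mul _ _ _ _ hx hy => exact hx.mul hy
  | inv _ _ hx => exact hx.inv

theorem Abelianization.finite_of_closure_eq_top_of_isOfFinOrder {G : Type*} [Group G]
    {S : Set G} (hS : closure S = ⊤) (hfin : S.Finite) (htors : ∀ s ∈ S, IsOfFinOrder s) :
    Finite (Abelianization G) := by
  refine CommGroup.finite_of_closure_eq_top_of_isOfFinOrder (S := of '' S) ?_
    (hfin.image _) ?_
  · rw [← MonoidHom.map_closure, hS, map_top_of_surjective _ QuotientGroup.mk_surjective]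
  · rintro _ ⟨s, hs, rfl⟩
    exact of.isOfFinOrder (htors s hs)

theorem Group.finite_of_closure_eq_top_of_conj_mem {G : Type*} [Group G] {S : Set G}
    (hS : closure S = ⊤) (hfin : S.Finite) (htors : ∀ s ∈ S, IsOfFinOrder s)
    (hconj : ∀ g : G, ∀ s ∈ S, g * s * g⁻¹ ∈ S) : Finite G := by
  have := finiteIndex_center_of_closure_eq_top_of_conj_mem hS hfin hconj
  have := (finite_commutatorSet_of_finiteIndex_center (G := G)).to_subtype
  have : Finite (G ⧸ commutator G) :=
    Abelianization.finite_of_closure_eq_top_of_isOfFinOrder hS hfin htors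
  -- `Finite (commutator G)` is Schur's theorem, found by instance search.
  exact Finite.of_subgroup_quotient (commutator G)

theorem Subgroup.finite_closure_of_conj_mem {G : Type*} [Group G] {S : Set G}
    (hfin : S.Finite) (htors : ∀ s ∈ S, IsOfFinOrder s)
    (hconj : ∀ g : G, ∀ s ∈ S, g * s * g⁻¹ ∈ S) : (closure S : Set G).Finite := by
  rw [← Set.finite_coe_iff]
  refine Group.finite_of_closure_eq_top_of_conj_mem (closure_preimage_eq_top S)
    (hfin.preimage Subtype.val_injective.injOn) (fun s hs => ?_) (fun g s => hconj g s)
  exact (closure S).subtype_injective.isOfFinOrder_iff.mp (htors s hs)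

/-- Dicman's Lemma: if `X` is a finite subset of a group `G` consisting of elements of
finite order whose centralisers have finite index in `G`, then the normal closure of the
subgroup generated by `X` is finite. -/
theorem stmt4 {G : Type*} [Group G] (X : Set G) (hfin : X.Finite)
    (hord : ∀ x ∈ X, IsOfFinOrder x)
    (hcent : ∀ x ∈ X, (Subgroup.centralizer {x}).FiniteIndex) :
    (Subgroup.normalClosure X : Set G).Finite := by
  refine finite_closure_of_conj_mem ?_ (fun y hy => ?_)
    (fun g y hy => Group.conj_mem_conjugatesOfSet hy)
  · exact hfin.biUnion fun x hx =>
      (finiteIndex_centralizer_iff_finite_conjugatesOf x).mp (hcent x hx)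
  · obtain ⟨x, hx, hxy⟩ := Group.mem_conjugatesOfSet_iff.mp hy
    exact hxy.isOfFinOrder (hord x hx)
end

section
/- Let G be a residually finite group with no non-trivial finite normal subgroups, and let H be a subgroup of G of finite index. If H is just infinite, then every subgroup of G containing H is just infinite. If H is hereditarily just infinite, then G is hereditarily just infinite. -/
/-- A group is just infinite if it is infinite and every non-trivial normal subgroup has
finite index. -/
def JustInfinite (G : Type*) [Group G] : Prop :=
  Infinite G ∧ ∀ N : Subgroup G, N.Normal → N ≠ ⊥ → N.FiniteIndex

/-- A group is hereditarily just infinite if every finite index subgroup (including the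
group itself) is just infinite. -/
def HereditarilyJustInfinite (G : Type*) [Group G] : Prop :=
  ∀ H : Subgroup G, H.FiniteIndex → JustInfinite H

/-!
Everything rests on `Fin(K) = 1` for finite-index `K ≤ G`. Let `B` be a finite subgroup
normalized by `K`. Its centralizer has finite index (`K` acts on `B` through the finite group
`Aut B`), so the normal core `C` of that centralizer is a finite-index normal subgroup
centralized by the normal closure `W` of `B`. Hence `Z(W) ⊇ W ⊓ C` has finite index in `W`, and
`W` is generated by the finitely many conjugates of elements of `B`, all of finite order. The
transfer `w ↦ w ^ [W : Z(W)]` into `Z(W)` then shows that `W` is torsion, so the finitely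
generated abelian torsion group `Z(W)` is finite, and so is `W`. Being normal in `G`, `W` is
trivial, hence so is `B`.

If `H ≤ K` and `H` is just infinite, a non-trivial normal subgroup `N` of `K` is thus infinite,
so `N ⊓ H ≠ 1` (otherwise `N` embeds into `G ⧸ H`); then `N ⊓ H` has finite index in `H`,
hence `N` has finite index in `K`. The hereditary statement follows by applying this to
`L ⊓ H ≤ L` for each finite-index `L`.
-/

open Subgroup
open scoped IsMulCommutative

/-- The condition `Fin(G) = 1`. -/
def FiniteNormalSubgroupsTrivial (G : Type*) [Group G] : Prop :=
  ∀ N : Subgroup G, N.Normal → (N : Set G).Finite → N = ⊥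

section

variable {G : Type*} [Group G]

theorem finite_of_closure_eq_top_of_finiteIndex_center [(center G).FiniteIndex] {X : Set G}
    (hX : X.Finite) (hXG : closure X = ⊤) (hXtor : ∀ x ∈ X, IsOfFinOrder x) : Finite G := by
  have : Group.FG G := Group.fg_iff.mpr ⟨X, hXG, hX⟩
  have htransfer : ∀ g : G, IsOfFinOrder (MonoidHom.transferCenterPow G g) := by
    intro g
    have hg : g ∈ closure X := hXG ▸ mem_top g
    induction hg using closure_induction with
    | mem x hx => exact MonoidHom.isOfFinOrder _ (hXtor x hx)
    | one => simp
    | mul x y _ _ hx hy => rw [map_mul]; exact Commute.isOfFinOrder_mul (mul_comm' _ _) hx hy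
    | inv x _ hx => rw [map_inv]; exact hx.inv
  have htor : IsMulTorsion G := fun g =>
    (MonoidHom.isOfFinOrder (center G).subtype (htransfer g)).of_pow FiniteIndex.index_ne_zero
  have : Finite (center G) := CommGroup.finite_of_fg_isMulTorsion _ (htor.subgroup _)
  exact (finite_iff_finite_and_finiteIndex (H := center G)).mpr ⟨this, inferInstance⟩

theorem finite_conjugatesOf (g : G) [hg : (centralizer {g}).FiniteIndex] :
    (conjugatesOf g).Finite := by
  have : (MulAction.stabilizer (ConjAct G) g).FiniteIndex := by
    rw [ConjAct.stabilizer_eq_centralizer]; exact hg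
  have horbit : conjugatesOf g = MulAction.orbit (ConjAct G) g := by
    ext h
    rw [ConjAct.mem_orbit_conjAct, isConj_comm]
    rfl
  rw [horbit]
  exact Set.finite_of_ncard_ne_zero
    (MulAction.index_stabilizer (ConjAct G) g ▸ FiniteIndex.index_ne_zero)

theorem Subgroup.finiteIndex_centralizer_of_finite (B : Subgroup G) [Finite B]
    [(normalizer (B : Set G)).FiniteIndex] : (centralizer (B : Set G)).FiniteIndex := by
  have hker : (normalizerMonoidHom B).ker.FiniteIndex := inferInstance
  rw [normalizerMonoidHom_ker] at hker
  exact ⟨relIndex_mul_index (centralizer_le_normalizer (B : Set G)) ▸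
    mul_ne_zero hker.index_ne_zero FiniteIndex.index_ne_zero⟩

theorem Subgroup.finite_normalClosure_of_finite (B : Subgroup G) [Finite B]
    [(normalizer (B : Set G)).FiniteIndex] : Finite (normalClosure (B : Set G)) := by
  have := B.finiteIndex_centralizer_of_finite
  set W := normalClosure (B : Set G)
  set C := (centralizer (B : Set G)).normalCore
  have hWC : W ≤ centralizer C :=
    normalClosure_le_normal (le_centralizer_iff.mp (normalCore_le _))
  have hcenter : (center W).FiniteIndex := finiteIndex_of_le (H := C.subgroupOf W) fun c hc =>
    mem_center_iff.mpr fun w => Subtype.ext (mem_centralizer_iff.mp (hWC w.2) c hc).symm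
  have hconj : (Group.conjugatesOfSet (B : Set G)).Finite :=
    (Set.toFinite (B : Set G)).biUnion fun b hb =>
      have := finiteIndex_of_le (centralizer_le (Set.singleton_subset_iff.mpr hb))
      finite_conjugatesOf b
  have hgen : closure (((↑) : W → G) ⁻¹' Group.conjugatesOfSet (B : Set G)) = ⊤ :=
    closure_closure_coe_preimage (k := Group.conjugatesOfSet (B : Set G))
  refine finite_of_closure_eq_top_of_finiteIndex_center
    (hconj.preimage Subtype.val_injective.injOn) hgen fun x hx => ?_
  obtain ⟨b, hb, hbx⟩ := Group.mem_conjugatesOfSet_iff.mp hx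
  exact Submonoid.isOfFinOrder_coe.mp
    (hbx.isOfFinOrder (Submonoid.isOfFinOrder_coe.mpr (isOfFinOrder_of_finite (⟨b, hb⟩ : B))))

theorem Subgroup.finite_of_disjoint {N H : Subgroup G} [H.FiniteIndex] (h : Disjoint N H) :
    Finite N := by
  have hbot : H.subgroupOf N = ⊥ := subgroupOf_eq_bot.mpr h.symm
  exact Nat.finite_of_card_ne_zero (index_bot (G := N) ▸ hbot ▸ FiniteIndex.index_ne_zero)

theorem FiniteNormalSubgroupsTrivial.eq_bot_of_finite (hG : FiniteNormalSubgroupsTrivial G)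
    (B : Subgroup G) [Finite B] [(normalizer (B : Set G)).FiniteIndex] : B = ⊥ := by
  have := B.finite_normalClosure_of_finite
  have hW := hG (normalClosure (B : Set G)) normalClosure_normal (Set.toFinite _)
  exact le_bot_iff.mp (hW ▸ le_normalClosure)

theorem FiniteNormalSubgroupsTrivial.subgroup (hG : FiniteNormalSubgroupsTrivial G)
    (K : Subgroup G) [K.FiniteIndex] : FiniteNormalSubgroupsTrivial K := by
  intro N hN hNfin
  have : Finite (N.map K.subtype) := by
    have : ((N.map K.subtype : Subgroup G) : Set G).Finite := by
      rw [coe_map]; exact hNfin.image _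
    exact this.to_subtype
  have : ((N.map K.subtype).subgroupOf K).Normal := by
    rwa [subgroupOf, comap_map_eq_self_of_injective K.subtype_injective]
  have := finiteIndex_of_le (le_normalizer_of_normal_subgroupOf (map_subtype_le N))
  exact (map_eq_bot_iff_of_injective N K.subtype_injective).mp (hG.eq_bot_of_finite _)

theorem JustInfinite.of_mulEquiv {G' : Type*} [Group G'] (e : G ≃* G') (hG : JustInfinite G) :
    JustInfinite G' := by
  obtain ⟨hinf, hnormal⟩ := hG
  refine ⟨e.toEquiv.infinite_iff.mp hinf, fun N hN hN1 => ?_⟩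
  have hcomap : N.comap e.toMonoidHom ≠ ⊥ := fun h => hN1 <| by
    rw [← map_comap_eq_self_of_surjective (f := e.toMonoidHom) e.surjective N, h,
      Subgroup.map_bot]
  have := hnormal _ (hN.comap _) hcomap
  exact ⟨index_comap_of_surjective N (f := e.toMonoidHom) e.surjective ▸
    FiniteIndex.index_ne_zero⟩

theorem JustInfinite.of_finiteIndex (hG : FiniteNormalSubgroupsTrivial G) {H : Subgroup G}
    [H.FiniteIndex] (hH : JustInfinite H) : JustInfinite G := by
  obtain ⟨hinf, hnormal⟩ := hH
  refine ⟨Infinite.of_injective _ H.subtype_injective, fun N hN hN1 => ?_⟩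
  have hNH : N.subgroupOf H ≠ ⊥ := fun h =>
    have := finite_of_disjoint (subgroupOf_eq_bot.mp h)
    hN1 (hG N hN (Set.toFinite _))
  have := hnormal _ (hN.subgroupOf H) hNH
  exact ⟨relIndex_top_right N ▸ relIndex_ne_zero_trans FiniteIndex.index_ne_zero
    (relIndex_top_right H ▸ FiniteIndex.index_ne_zero)⟩

theorem JustInfinite.of_le (hG : FiniteNormalSubgroupsTrivial G) {H K : Subgroup G}
    [H.FiniteIndex] (hH : JustInfinite H) (hHK : H ≤ K) : JustInfinite K :=
  have := finiteIndex_of_le hHK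
  (hH.of_mulEquiv (subgroupOfEquivOfLe hHK).symm).of_finiteIndex (hG.subgroup K)

theorem HereditarilyJustInfinite.of_finiteIndex (hG : FiniteNormalSubgroupsTrivial G)
    {H : Subgroup G} [H.FiniteIndex] (hH : HereditarilyJustInfinite H) :
    HereditarilyJustInfinite G := fun L _ =>
  (hH _ inferInstance |>.of_mulEquiv (subgroupOfEquivOfLe (inf_le_right : L ⊓ H ≤ H))).of_le hG
    inf_le_left

end

theorem stmt7_general {G : Type*} [Group G]
    (hfin : ∀ N : Subgroup G, N.Normal → (N : Set G).Finite → N = ⊥)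
    (H : Subgroup G) (hidx : H.FiniteIndex) :
    (JustInfinite H → ∀ K : Subgroup G, H ≤ K → JustInfinite K) ∧
    (HereditarilyJustInfinite H → HereditarilyJustInfinite G) :=
  ⟨fun hH _ hHK => hH.of_le hfin hHK, fun hH => hH.of_finiteIndex hfin⟩

/-- Let `G` be residually finite with no non-trivial finite normal subgroups, and let `H`
be a finite index subgroup.  If `H` is just infinite then so is every subgroup of `G`
containing `H`; if `H` is hereditarily just infinite then so is `G`. -/
theorem stmt7 {G : Type*} [Group G]
    (hres : ∀ g : G, g ≠ 1 → ∃ N : Subgroup G, N.Normal ∧ N.FiniteIndex ∧ g ∉ N)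
    (hfin : ∀ N : Subgroup G, N.Normal → (N : Set G).Finite → N = ⊥)
    (H : Subgroup G) (hidx : H.FiniteIndex) :
    (JustInfinite H → ∀ K : Subgroup G, H ≤ K → JustInfinite K) ∧
    (HereditarilyJustInfinite H → HereditarilyJustInfinite G) :=
  stmt7_general hfin H hidx
end

section
/- Let G be a just infinite group that is not virtually abelian, and let K be a non-trivial subgroup of G that is subnormal of defect at most 2 (i.e., K ⊴ L ⊴ G for some L), such that distinct G-conjugates of K intersect trivially. Then K is basal in G: the normal closure K^G is the internal direct product of the distinct conjugates of K. -/
namespace Subgroup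

variable {G : Type*} [Group G]

def conjugates (K : Subgroup G) : Set (Subgroup G) :=
  {L : Subgroup G | ∃ g : G, L = K.map (MulAut.conj g).toMonoidHom}

theorem map_conj_mul (K : Subgroup G) (a b : G) :
    K.map (MulAut.conj (a * b)).toMonoidHom =
      (K.map (MulAut.conj b).toMonoidHom).map (MulAut.conj a).toMonoidHom := by
  rw [map_map]
  congr 1
  ext x
  simp [mul_assoc]

theorem map_conj_mem_conjugates {K M : Subgroup G} (hM : M ∈ conjugates K) (g : G) :
    M.map (MulAut.conj g).toMonoidHom ∈ conjugates K := by
  obtain ⟨h, rfl⟩ := hM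
  exact ⟨g * h, (map_conj_mul K g h).symm⟩

theorem map_conj_eq_of_inv_mul_mem_normalizer {K : Subgroup G} {a b : G}
    (hab : a⁻¹ * b ∈ normalizer (K : Set G)) :
    K.map (MulAut.conj a).toMonoidHom = K.map (MulAut.conj b).toMonoidHom := by
  rw [← mul_inv_cancel_left a b, map_conj_mul]
  simp only [MulEquiv.toMonoidHom_eq_coe, mem_normalizer_iff_map_conj_eq.mp hab]

theorem conjugates_finite (K : Subgroup G) [(normalizer (K : Set G)).FiniteIndex] :
    (conjugates K).Finite := by
  let conjOfCoset : G ⧸ normalizer (K : Set G) → Subgroup G := fun q =>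
    q.liftOn' (fun g => K.map (MulAut.conj g).toMonoidHom) fun _ _ h =>
      map_conj_eq_of_inv_mul_mem_normalizer (QuotientGroup.leftRel_apply.mp h)
  refine (Set.finite_range conjOfCoset).subset ?_
  rintro _ ⟨g, rfl⟩
  exact ⟨g, rfl⟩

theorem sSup_conjugates_eq_normalClosure (K : Subgroup G) :
    sSup (conjugates K) = normalClosure (K : Set G) := by
  refine le_antisymm (sSup_le ?_) ((closure_le _).mpr ?_)
  · rintro _ ⟨g, rfl⟩
    exact (map_mono le_normalClosure).trans (Normal.map_conj_eq _ g).le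
  · intro x hx
    obtain ⟨k, hk, hconj⟩ := Group.mem_conjugatesOfSet_iff.mp hx
    obtain ⟨c, rfl⟩ := isConj_iff.mp hconj
    exact mem_sSup_of_mem (S := conjugates K) ⟨c, rfl⟩ (mem_map_of_mem _ hk)

theorem commute_of_le_normalizer_of_disjoint {A B : Subgroup G}
    (hA : A ≤ normalizer (B : Set G)) (hB : B ≤ normalizer (A : Set G)) (hAB : Disjoint A B)
    {x y : G} (hx : x ∈ A) (hy : y ∈ B) : Commute x y := by
  rw [← commutatorElement_eq_one_iff_commute, ← mem_bot, ← hAB.eq_bot, mem_inf,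
    commutatorElement_def]
  constructor
  · have : y * x⁻¹ * y⁻¹ ∈ A := (mem_normalizer_iff.mp (hB hy) _).mp (A.inv_mem hx)
    simpa only [mul_assoc] using A.mul_mem hx this
  · exact B.mul_mem ((mem_normalizer_iff.mp (hA hx) y).mp hy) (B.inv_mem hy)

theorem map_conj_le_of_normal {K L : Subgroup G} [L.Normal] (hKL : K ≤ L) (g : G) :
    K.map (MulAut.conj g).toMonoidHom ≤ L :=
  (map_mono hKL).trans_eq (Normal.map_conj_eq L g)

theorem le_normalizer_map_conj_of_normal {K L : Subgroup G} [L.Normal]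
    (hLK : L ≤ normalizer (K : Set G)) (g : G) :
    L ≤ normalizer (K.map (MulAut.conj g).toMonoidHom : Set G) := by
  rw [← map_equiv_normalizer_eq, ← Normal.map_conj_eq L g]
  exact map_mono hLK

theorem conjugates_pairwise_commute {K L : Subgroup G} [L.Normal] (hKL : K ≤ L)
    (hLK : L ≤ normalizer (K : Set G)) (hdis : (conjugates K).Pairwise Disjoint) :
    (conjugates K).Pairwise fun M N => ∀ x ∈ M, ∀ y ∈ N, Commute x y := by
  rintro _ ⟨g, rfl⟩ _ ⟨h, rfl⟩ hne x hx y hy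
  exact commute_of_le_normalizer_of_disjoint
    ((map_conj_le_of_normal hKL g).trans (le_normalizer_map_conj_of_normal hLK h))
    ((map_conj_le_of_normal hKL h).trans (le_normalizer_map_conj_of_normal hLK g))
    (hdis ⟨g, rfl⟩ ⟨h, rfl⟩ hne) hx hy

theorem map_conj_inf_centralizer_le (M : Subgroup G) (g : G) :
    (M ⊓ centralizer (M : Set G)).map (MulAut.conj g).toMonoidHom ≤
      M.map (MulAut.conj g).toMonoidHom ⊓
        centralizer (M.map (MulAut.conj g).toMonoidHom : Set G) := by
  refine (map_inf_le _ _ _).trans (inf_le_inf_left _ ?_)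
  rw [coe_map]
  exact map_centralizer_le_centralizer_image _ _

theorem commute_of_mem_inf_centralizer {S : Set (Subgroup G)}
    (hS : S.Pairwise fun M N => ∀ x ∈ M, ∀ y ∈ N, Commute x y) {M N : Subgroup G}
    (hM : M ∈ S) (hN : N ∈ S) {x y : G} (hx : x ∈ M ⊓ centralizer (M : Set G))
    (hy : y ∈ N ⊓ centralizer (N : Set G)) : Commute x y := by
  rcases eq_or_ne M N with rfl | hne
  · exact mem_centralizer_iff.mp hy.2 x hx.1
  · exact hS hM hN hne x hx.1 y hy.1

theorem isMulCommutative_normalClosure_inf_centralizer {K M : Subgroup G}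
    (hcomm : (conjugates K).Pairwise fun M N => ∀ x ∈ M, ∀ y ∈ N, Commute x y)
    (hM : M ∈ conjugates K) :
    IsMulCommutative (normalClosure (M ⊓ centralizer (M : Set G) : Set G)) := by
  have hgen : ∀ a ∈ Group.conjugatesOfSet (M ⊓ centralizer (M : Set G) : Set G),
      ∃ N ∈ conjugates K, a ∈ N ⊓ centralizer (N : Set G) := by
    intro a ha
    obtain ⟨z, hz, hconj⟩ := Group.mem_conjugatesOfSet_iff.mp ha
    obtain ⟨c, rfl⟩ := isConj_iff.mp hconj
    exact ⟨_, map_conj_mem_conjugates hM c, map_conj_inf_centralizer_le M c (mem_map_of_mem _ hz)⟩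
  refine isMulCommutative_closure fun a ha b hb => ?_
  obtain ⟨N, hN, haN⟩ := hgen a ha
  obtain ⟨N', hN', hbN'⟩ := hgen b hb
  exact commute_of_mem_inf_centralizer hcomm hN hN' haN hbN'

theorem inf_centralizer_eq_bot_of_mem_conjugates (hji : JustInfinite G)
    (hnva : ¬ ∃ A : Subgroup G, (∀ a ∈ A, ∀ b ∈ A, a * b = b * a) ∧ A.FiniteIndex)
    {K M : Subgroup G} (hcomm : (conjugates K).Pairwise fun M N => ∀ x ∈ M, ∀ y ∈ N, Commute x y)
    (hM : M ∈ conjugates K) : M ⊓ centralizer (M : Set G) = ⊥ := by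
  by_contra hne
  refine hnva ⟨normalClosure (M ⊓ centralizer (M : Set G) : Set G),
    isMulCommutative_iff_of_setLike.mp (isMulCommutative_normalClosure_inf_centralizer hcomm hM),
    hji.2 _ normalClosure_normal fun h => hne ?_⟩
  exact eq_bot_iff.mpr (le_normalClosure.trans h.le)

theorem sSupIndep_of_pairwise_commute {S : Set (Subgroup G)}
    (hcomm : S.Pairwise fun M N => ∀ x ∈ M, ∀ y ∈ N, Commute x y)
    (hcenter : ∀ M ∈ S, M ⊓ centralizer (M : Set G) = ⊥) : sSupIndep S := by
  intro M hM
  have hle : sSup (S \ {M}) ≤ centralizer (M : Set G) := sSup_le fun N ⟨hN, hNM⟩ y hy =>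
    mem_centralizer_iff.mpr fun x hx => hcomm hM hN (Ne.symm hNM) x hx y hy
  exact disjoint_iff.mpr (eq_bot_iff.mpr ((inf_le_inf_left M hle).trans (hcenter M hM).le))

end Subgroup

/-- Let `G` be just infinite and not virtually abelian, and let `K` be a non-trivial
subgroup that is subnormal of defect at most 2, whose distinct conjugates intersect
trivially.  Then `K` is basal: there are finitely many conjugates of `K`; they are
independent, pairwise commute, and together generate the normal closure of `K`
(i.e. the normal closure is their internal direct product). -/
theorem stmt8 {G : Type*} [Group G] (hji : JustInfinite G)
    (hnva : ¬ ∃ A : Subgroup G, (∀ a ∈ A, ∀ b ∈ A, a * b = b * a) ∧ A.FiniteIndex)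
    (K : Subgroup G) (hK : K ≠ ⊥)
    (hsub : ∃ L : Subgroup G, L.Normal ∧ K ≤ L ∧ ∀ g ∈ L, ∀ k ∈ K, g * k * g⁻¹ ∈ K)
    (htriv : ∀ g h : G,
      K.map (MulAut.conj g).toMonoidHom ≠ K.map (MulAut.conj h).toMonoidHom →
      K.map (MulAut.conj g).toMonoidHom ⊓ K.map (MulAut.conj h).toMonoidHom = ⊥) :
    {L : Subgroup G | ∃ g : G, L = K.map (MulAut.conj g).toMonoidHom}.Finite ∧
    sSup {L : Subgroup G | ∃ g : G, L = K.map (MulAut.conj g).toMonoidHom} =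
      Subgroup.normalClosure (K : Set G) ∧
    sSupIndep {L : Subgroup G | ∃ g : G, L = K.map (MulAut.conj g).toMonoidHom} ∧
    ∀ L ∈ {L : Subgroup G | ∃ g : G, L = K.map (MulAut.conj g).toMonoidHom},
      ∀ M ∈ {L : Subgroup G | ∃ g : G, L = K.map (MulAut.conj g).toMonoidHom},
        L ≠ M → ∀ x ∈ L, ∀ y ∈ M, Commute x y := by
  obtain ⟨L, hLn, hKL, hLK⟩ := hsub
  have hLK : L ≤ Subgroup.normalizer (K : Set G) := Subgroup.le_set_normalizer_iff.mpr hLK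
  have : L.FiniteIndex := hji.2 L hLn fun hL => hK (le_bot_iff.mp (hL ▸ hKL))
  have : (Subgroup.normalizer (K : Set G)).FiniteIndex := Subgroup.finiteIndex_of_le hLK
  have hdis : K.conjugates.Pairwise Disjoint := by
    rintro _ ⟨g, rfl⟩ _ ⟨h, rfl⟩ hne
    exact disjoint_iff.mpr (htriv g h hne)
  have hcomm := Subgroup.conjugates_pairwise_commute hKL hLK hdis
  exact ⟨K.conjugates_finite, K.sSup_conjugates_eq_normalClosure,
    Subgroup.sSupIndep_of_pairwise_commute hcomm fun _ hM =>
      Subgroup.inf_centralizer_eq_bot_of_mem_conjugates hji hnva hcomm hM,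
    hcomm⟩
end

section
/- Let G be a just infinite group that is not virtually abelian, and let B be a basal subgroup of G. Then N_G(B)/C_G(B) is just infinite. -/
/-!
`N_G(B)` has finite index because `B` has finitely many conjugates, while `C_G(B)` has infinite
index: otherwise its normal core `K` would centralise the finite-index subgroup `B^G`, and
`K ⊓ C_G(K)` would be an abelian subgroup of finite index. So `N_G(B)/C_G(B)` is infinite.

If `M ⊴ N_G(B)` properly contains `C_G(B)`, choose `m ∈ M` and `b ∈ B` that do not commute;
then `d = ⁅m, b⁆` is a non-trivial element of `B ⊓ M`. Conjugating `d` by `g ∈ N_G(B)` stays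
in `M`, and conjugating by `g ∉ N_G(B)` lands in `B^g ≠ B`, which centralises `B`, hence in
`C_G(B) ≤ M`. So `M` contains the non-trivial normal subgroup `d^G` of the just infinite
group `G`.
-/

open scoped Pointwise commutatorElement

namespace Subgroup

variable {G : Type*} [Group G] {B : Subgroup G}

def conjugateSubgroups (B : Subgroup G) : Set (Subgroup G) :=
  {L | ∃ g : G, L = B.map (MulAut.conj g).toMonoidHom}

lemma self_mem_conjugateSubgroups (B : Subgroup G) : B ∈ conjugateSubgroups B :=
  ⟨1, (mem_normalizer_iff_map_conj_eq.1 (one_mem _)).symm⟩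

/-- `N_G(B)` is the stabiliser of `B` under conjugation. -/
lemma index_normalizer_eq_ncard_conjugateSubgroups (B : Subgroup G) :
    (normalizer (B : Set G)).index = (conjugateSubgroups B).ncard := by
  have hstab : MulAction.stabilizer (ConjAct G) B =
      (normalizer (B : Set G)).comap (G := ConjAct G) ConjAct.ofConjAct.toMonoidHom := by
    ext g
    exact mem_normalizer_iff_map_conj_eq.symm
  have horbit : MulAction.orbit (ConjAct G) B = conjugateSubgroups B := by
    ext L
    exact ⟨fun ⟨g, hg⟩ ↦ ⟨ConjAct.ofConjAct g, hg.symm⟩,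
      fun ⟨g, hg⟩ ↦ ⟨ConjAct.toConjAct g, hg.symm⟩⟩
  rw [← horbit, ← MulAction.index_stabilizer, hstab,
    index_comap_of_surjective _ ConjAct.ofConjAct.surjective]

lemma finiteIndex_normalizer_of_finite (hfin : (conjugateSubgroups B).Finite) :
    (normalizer (B : Set G)).FiniteIndex := by
  rw [finiteIndex_iff, index_normalizer_eq_ncard_conjugateSubgroups]
  exact (Set.ncard_pos hfin).2 ⟨B, self_mem_conjugateSubgroups B⟩ |>.ne'

/-- The elements of the normal core of `C_G(B)` commute with every conjugate of `B`, so they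
centralise `B^G`. -/
lemma exists_commute_finiteIndex_of_finiteIndex_centralizer
    [(centralizer (B : Set G)).FiniteIndex] [(normalClosure (B : Set G)).FiniteIndex] :
    ∃ A : Subgroup G, (∀ a ∈ A, ∀ b ∈ A, a * b = b * a) ∧ A.FiniteIndex := by
  set K := (centralizer (B : Set G)).normalCore
  have hK : normalClosure (B : Set G) ≤ centralizer (K : Set G) :=
    normalClosure_le_normal (le_centralizer_iff.2 (normalCore_le _))
  have : (centralizer (K : Set G)).FiniteIndex := finiteIndex_of_le hK
  exact ⟨K ⊓ centralizer K, fun a ha b hb ↦ mem_centralizer_iff.1 hb.2 a ha.1,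
    inferInstance⟩

lemma not_finiteIndex_centralizer
    (hji : ∀ N : Subgroup G, N.Normal → N ≠ ⊥ → N.FiniteIndex)
    (hnva : ¬ ∃ A : Subgroup G, (∀ a ∈ A, ∀ b ∈ A, a * b = b * a) ∧ A.FiniteIndex)
    (hB : B ≠ ⊥) : ¬ (centralizer (B : Set G)).FiniteIndex := by
  intro hC
  have hncl : normalClosure (B : Set G) ≠ ⊥ := fun h ↦
    hB (le_bot_iff.1 (h ▸ le_normalClosure))
  have := hji _ normalClosure_normal hncl
  exact hnva (exists_commute_finiteIndex_of_finiteIndex_centralizer (B := B))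

lemma infinite_quotient_subgroupOf {H K : Subgroup G} (hHK : H ≤ K) [K.FiniteIndex]
    (hH : ¬ H.FiniteIndex) : Infinite (K ⧸ H.subgroupOf K) := by
  rw [← not_finite_iff_infinite]
  intro hfin
  apply hH
  rw [finiteIndex_iff, ← relIndex_mul_index hHK]
  exact Nat.mul_ne_zero (index_ne_zero_iff_finite.2 hfin) FiniteIndex.index_ne_zero

lemma conj_mem_centralizer_of_notMem_normalizer
    (hcomm : ∀ L ∈ conjugateSubgroups B, ∀ M ∈ conjugateSubgroups B,
      L ≠ M → ∀ x ∈ L, ∀ y ∈ M, Commute x y)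
    {g : G} (hg : g ∉ normalizer (B : Set G)) {x : G} (hx : x ∈ B) :
    g * x * g⁻¹ ∈ centralizer (B : Set G) := by
  have hne : B.map (MulAut.conj g).toMonoidHom ≠ B := fun h ↦
    hg (mem_normalizer_iff_map_conj_eq.2 h)
  refine mem_centralizer_iff.2 fun y hy ↦ ?_
  exact (hcomm _ ⟨g, rfl⟩ B (self_mem_conjugateSubgroups B) hne _ ⟨x, hx, rfl⟩ y hy).symm.eq

/-- The witness is a commutator `⁅m, b⁆` with `m ∈ M` not centralising `b ∈ B`. -/
lemma exists_mem_inter_ne_one_of_not_le_centralizer (M : Subgroup (normalizer (B : Set G)))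
    [M.Normal] (hMC : ¬ M ≤ (centralizer (B : Set G)).subgroupOf (normalizer (B : Set G))) :
    ∃ d ∈ M, (d : G) ∈ B ∧ d ≠ 1 := by
  obtain ⟨m, hmM, hmC⟩ := SetLike.not_le_iff_exists.1 hMC
  obtain ⟨b, hbB, hbm⟩ : ∃ b ∈ B, b * (m : G) ≠ m * b := by
    simpa [mem_subgroupOf, mem_centralizer_iff] using hmC
  let b' : normalizer (B : Set G) := ⟨b, le_normalizer hbB⟩
  refine ⟨⁅m, b'⁆, ?_, ?_, ?_⟩
  · rw [commutatorElement_def, mul_assoc, mul_assoc, ← mul_assoc b']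
    exact mul_mem hmM (‹M.Normal›.conj_mem _ (inv_mem hmM) b')
  · exact mul_mem ((mem_normalizer_iff.1 m.2 b).1 hbB) (inv_mem hbB)
  · intro h
    exact hbm (Subtype.ext_iff.1 (commutatorElement_eq_one_iff_mul_comm.1 h)).symm

lemma coe_mem_normalCore_map_subtype
    (hconj : ∀ g ∉ normalizer (B : Set G), ∀ x ∈ B,
      g * x * g⁻¹ ∈ centralizer (B : Set G))
    (M : Subgroup (normalizer (B : Set G))) [M.Normal]
    (hCM : (centralizer (B : Set G)).subgroupOf (normalizer (B : Set G)) ≤ M)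
    {d : normalizer (B : Set G)} (hdM : d ∈ M) (hdB : (d : G) ∈ B) :
    (d : G) ∈ (M.map (normalizer (B : Set G)).subtype).normalCore := by
  intro g
  by_cases hg : g ∈ normalizer (B : Set G)
  · exact ⟨⟨g, hg⟩ * d * ⟨g, hg⟩⁻¹, ‹M.Normal›.conj_mem d hdM _, rfl⟩
  · have hC := hconj g hg d hdB
    exact ⟨⟨_, centralizer_le_normalizer _ hC⟩, hCM (mem_subgroupOf.2 hC), rfl⟩

lemma finiteIndex_of_not_le_centralizer
    (hji : ∀ N : Subgroup G, N.Normal → N ≠ ⊥ → N.FiniteIndex)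
    (hconj : ∀ g ∉ normalizer (B : Set G), ∀ x ∈ B,
      g * x * g⁻¹ ∈ centralizer (B : Set G))
    (M : Subgroup (normalizer (B : Set G))) [M.Normal]
    (hCM : (centralizer (B : Set G)).subgroupOf (normalizer (B : Set G)) ≤ M)
    (hMC : ¬ M ≤ (centralizer (B : Set G)).subgroupOf (normalizer (B : Set G))) :
    M.FiniteIndex := by
  obtain ⟨d, hdM, hdB, hd1⟩ := exists_mem_inter_ne_one_of_not_le_centralizer M hMC
  set K := (M.map (normalizer (B : Set G)).subtype).normalCore
  have hdK : (d : G) ∈ K := coe_mem_normalCore_map_subtype hconj M hCM hdM hdB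
  have hK : K ≠ ⊥ := fun h ↦ hd1 (Subtype.ext (by rwa [h, mem_bot] at hdK))
  have := hji K inferInstance hK
  have := finiteIndex_of_le (normalCore_le (M.map (normalizer (B : Set G)).subtype))
  rw [finiteIndex_iff, index_map_subtype] at this
  exact ⟨left_ne_zero_of_mul this⟩

end Subgroup

lemma QuotientGroup.finiteIndex_of_ne_bot {N : Type*} [Group N] {C : Subgroup N} [C.Normal]
    (h : ∀ M : Subgroup N, M.Normal → C ≤ M → ¬ M ≤ C → M.FiniteIndex)
    (M : Subgroup (N ⧸ C)) [M.Normal] (hM : M ≠ ⊥) : M.FiniteIndex := by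
  have hCM : C ≤ M.comap (mk' C) := fun x hx ↦ by
    simp [(eq_one_iff x).2 hx, M.one_mem]
  have hMC : ¬ M.comap (mk' C) ≤ C := by
    refine fun hle ↦ hM ((Subgroup.eq_bot_iff_forall M).2 fun y hy ↦ ?_)
    obtain ⟨x, rfl⟩ := mk'_surjective C y
    exact (eq_one_iff x).2 (hle hy)
  have := h _ inferInstance hCM hMC
  rw [Subgroup.finiteIndex_iff, Subgroup.index_comap_of_surjective _ (mk'_surjective C)] at this
  exact ⟨this⟩

theorem stmt9_general {G : Type*} [Group G] (hji : JustInfinite G)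
    (hnva : ¬ ∃ A : Subgroup G, (∀ a ∈ A, ∀ b ∈ A, a * b = b * a) ∧ A.FiniteIndex)
    (B : Subgroup G) (hB : B ≠ ⊥)
    (hfin : {L : Subgroup G | ∃ g : G, L = B.map (MulAut.conj g).toMonoidHom}.Finite)
    (hcomm : ∀ L ∈ {L : Subgroup G | ∃ g : G, L = B.map (MulAut.conj g).toMonoidHom},
      ∀ M ∈ {L : Subgroup G | ∃ g : G, L = B.map (MulAut.conj g).toMonoidHom},
        L ≠ M → ∀ x ∈ L, ∀ y ∈ M, Commute x y) :
    JustInfinite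
      (↥(Subgroup.normalizer (B : Set G)) ⧸ (Subgroup.centralizer (B : Set G)).subgroupOf (Subgroup.normalizer (B : Set G))) := by
  have hN := Subgroup.finiteIndex_normalizer_of_finite hfin
  refine ⟨Subgroup.infinite_quotient_subgroupOf (Subgroup.centralizer_le_normalizer _)
    (Subgroup.not_finiteIndex_centralizer hji.2 hnva hB), fun M _ hM ↦ ?_⟩
  refine QuotientGroup.finiteIndex_of_ne_bot (fun M' _ ↦ ?_) M hM
  exact Subgroup.finiteIndex_of_not_le_centralizer hji.2
    (fun g hg x hx ↦ Subgroup.conj_mem_centralizer_of_notMem_normalizer hcomm hg hx) M'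

/-- Let `G` be just infinite and not virtually abelian, and let `B` be a basal subgroup of
`G` (the normal closure of `B` is the internal direct product of the finitely many distinct
conjugates of `B`).  Then `N_G(B) / C_G(B)` is just infinite. -/
theorem stmt9 {G : Type*} [Group G] (hji : JustInfinite G)
    (hnva : ¬ ∃ A : Subgroup G, (∀ a ∈ A, ∀ b ∈ A, a * b = b * a) ∧ A.FiniteIndex)
    (B : Subgroup G) (hB : B ≠ ⊥)
    (hfin : {L : Subgroup G | ∃ g : G, L = B.map (MulAut.conj g).toMonoidHom}.Finite)
    (hgen : sSup {L : Subgroup G | ∃ g : G, L = B.map (MulAut.conj g).toMonoidHom} =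
      Subgroup.normalClosure (B : Set G))
    (hind : sSupIndep {L : Subgroup G | ∃ g : G, L = B.map (MulAut.conj g).toMonoidHom})
    (hcomm : ∀ L ∈ {L : Subgroup G | ∃ g : G, L = B.map (MulAut.conj g).toMonoidHom},
      ∀ M ∈ {L : Subgroup G | ∃ g : G, L = B.map (MulAut.conj g).toMonoidHom},
        L ≠ M → ∀ x ∈ L, ∀ y ∈ M, Commute x y)
    [hnorm : ((Subgroup.centralizer (B : Set G)).subgroupOf (Subgroup.normalizer (B : Set G))).Normal] :
    JustInfinite
      (↥(Subgroup.normalizer (B : Set G)) ⧸ (Subgroup.centralizer (B : Set G)).subgroupOf (Subgroup.normalizer (B : Set G))) :=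
  stmt9_general hji hnva B hB hfin hcomm
end

section
/- Let G be a profinite group with trivial virtual centre, VZ(G) = 1, and suppose φ: U → V is a topological isomorphism between open subgroups U, V of G that agrees with the identity on some open subgroup W ≤ U. Then U = V and φ is the identity on U. -/
/-- Let `G` be a profinite group with trivial virtual centre, and let `φ : U → V` be a
topological isomorphism between open subgroups which agrees with the identity on an open
subgroup `W ≤ U`.  Then `U = V` and `φ` is the identity. -/
theorem stmt12 {G : Type*} [Group G] [TopologicalSpace G] [IsTopologicalGroup G]
    [CompactSpace G] [T2Space G] [TotallyDisconnectedSpace G]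
    (hvz : ∀ x : G, (Subgroup.centralizer {x}).FiniteIndex → x = 1)
    (U V W : Subgroup G) (hU : IsOpen (U : Set G)) (hV : IsOpen (V : Set G))
    (hW : IsOpen (W : Set G)) (hWU : W ≤ U)
    (φ : ↥U ≃* ↥V) (hφ : Continuous φ)
    (hid : ∀ w : G, ∀ hw : w ∈ W, (φ ⟨w, hWU hw⟩ : G) = w) :
    U = V ∧ ∀ u : ↥U, (φ u : G) = (u : G) := by
  have key : ∀ u : ↥U, (φ u : G) = (u : G) := by
    intro u
    set x : G := (u : G)⁻¹ * (φ u : G) with hx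
    -- the subgroup of w ∈ W with u w u⁻¹ ∈ W
    set K : Subgroup G := W ⊓ Subgroup.comap ((MulAut.conj (u : G)).toMonoidHom) W with hK
    have hKopen : IsOpen (K : Set G) := by
      have : IsOpen ((fun w : G => (u : G) * w * (u : G)⁻¹) ⁻¹' (W : Set G)) := by
        apply hW.preimage
        continuity
      exact hW.inter this
    have hKcent : K ≤ Subgroup.centralizer {x} := by
      intro w hw
      obtain ⟨hw1, hw2'⟩ := hw
      have hw2 : (u : G) * w * (u : G)⁻¹ ∈ W := hw2'
      intro y hy
      rcases hy with rfl
      -- φ (u w u⁻¹) = u w u⁻¹ and φ w = w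
      have huwu : ((u : ↥U) * ⟨w, hWU hw1⟩ * u⁻¹ : ↥U) =
          (⟨(u : G) * w * (u : G)⁻¹, hWU hw2⟩ : ↥U) := by
        ext; simp
      have h1 : (φ ((u : ↥U) * ⟨w, hWU hw1⟩ * u⁻¹) : G) = (u : G) * w * (u : G)⁻¹ := by
        rw [huwu]; exact hid _ hw2
      have h2 : (φ (⟨w, hWU hw1⟩ : ↥U) : G) = w := hid _ hw1
      have h3 : (φ u : G) * w * (φ u : G)⁻¹ = (u : G) * w * (u : G)⁻¹ := by
        have := h1
        rw [map_mul, map_mul, map_inv] at this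
        push_cast at this
        rw [h2] at this
        exact this
      -- from h3 deduce x commutes with w
      have h5 : (φ u : G) * w = (u : G) * w * (u : G)⁻¹ * (φ u : G) := by
        have h6 : (φ u : G) * w * (φ u : G)⁻¹ * (φ u : G) =
            (u : G) * w * (u : G)⁻¹ * (φ u : G) := by rw [h3]
        calc (φ u : G) * w = (φ u : G) * w * (φ u : G)⁻¹ * (φ u : G) := by group
          _ = (u : G) * w * (u : G)⁻¹ * (φ u : G) := h6
      show x * w = w * x
      rw [hx]
      calc (u : G)⁻¹ * (φ u : G) * w = (u : G)⁻¹ * ((φ u : G) * w) := by group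
        _ = (u : G)⁻¹ * ((u : G) * w * (u : G)⁻¹ * (φ u : G)) := by rw [h5]
        _ = w * ((u : G)⁻¹ * (φ u : G)) := by group
    have hKfin : K.FiniteIndex :=
      have := K.quotient_finite_of_isOpen hKopen
      K.finiteIndex_of_finite_quotient
    have hcfin : (Subgroup.centralizer {x}).FiniteIndex :=
      @Subgroup.finiteIndex_of_le G _ K _ hKfin hKcent
    have hx1 : x = 1 := hvz x hcfin
    rw [hx] at hx1
    exact (inv_mul_eq_one.mp hx1).symm
  refine ⟨le_antisymm ?_ ?_, key⟩
  · intro g hg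
    have h2 := (φ ⟨g, hg⟩).2
    rw [key ⟨g, hg⟩] at h2
    exact h2
  · intro g hg
    obtain ⟨u, hu⟩ := φ.surjective ⟨g, hg⟩
    have := key u
    rw [hu] at this
    simp only at this
    rw [this]
    exact u.2
end

section
/- Let G be a profinite group, and define for each isomorphism θ between open subgroups H and K of G the index ratio ϱ(θ) = |G:H| / |G:K| ∈ ℚ_{>0}. Then ϱ is multiplicative: if θ: H → K and ψ: K' → L are composable isomorphisms of open subgroups (with θ(H) ⊆ K'), then ϱ(θψ) = ϱ(θ)ϱ(ψ), where θψ denotes the composite restricted to an appropriate open subgroup. -/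
/-!
The composite maps `K` onto `ψ(K)`, whose index in `G` is `|K' : K| · |G : L|`, while
`|G : K| = |K' : K| · |G : K'|`. So both sides of the identity agree after cancelling `|G : K'|`,
which is nonzero because an open subgroup of a compact group has finite index.
-/

namespace Subgroup

variable {G : Type*} [Group G]

lemma range_subtype_comp_mulEquiv_comp_inclusion {H K K' L : Subgroup G}
    (θ : H ≃* K) (ψ : K' ≃* L) (hKK' : K ≤ K') :
    (L.subtype.comp (ψ.toMonoidHom.comp ((inclusion hKK').comp θ.toMonoidHom))).range =
      ((K.subgroupOf K').map ψ.toMonoidHom).map L.subtype := by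
  rw [MonoidHom.range_comp, MonoidHom.range_comp, MonoidHom.range_comp,
    MonoidHom.range_eq_top_of_surjective _ θ.surjective, ← MonoidHom.range_eq_map,
    inclusion_range]

lemma index_range_subtype_comp_mulEquiv_comp_inclusion {H K K' L : Subgroup G}
    (θ : H ≃* K) (ψ : K' ≃* L) (hKK' : K ≤ K') :
    (L.subtype.comp (ψ.toMonoidHom.comp ((inclusion hKK').comp θ.toMonoidHom))).range.index =
      K.relIndex K' * L.index := by
  rw [range_subtype_comp_mulEquiv_comp_inclusion, index_map_subtype]
  exact congrArg (· * L.index) (index_map_equiv _ ψ)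

end Subgroup

lemma div_mul_eq_div_mul_mul_div {F : Type*} [Field F] (h a k l : F) (hk : k ≠ 0) :
    h / (a * l) = h / (a * k) * (k / l) := by
  rw [div_mul_div_comm, mul_right_comm a k l, mul_div_mul_right _ _ hk]

theorem stmt13_general {G : Type*} [Group G] [TopologicalSpace G] [IsTopologicalGroup G]
    [CompactSpace G]
    (H K K' L : Subgroup G)
    (hK' : IsOpen (K' : Set G))
    (θ : ↥H ≃* ↥K) (ψ : ↥K' ≃* ↥L)
    (hKK' : K ≤ K') :
    ((H.index : ℚ) /
        ((MonoidHom.range (L.subtype.comp (ψ.toMonoidHom.comp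
          ((Subgroup.inclusion hKK').comp θ.toMonoidHom)))).index : ℚ)) =
      ((H.index : ℚ) / (K.index : ℚ)) * ((K'.index : ℚ) / (L.index : ℚ)) := by
  have hK'_index : (K'.index : ℚ) ≠ 0 :=
    Nat.cast_ne_zero.mpr (Subgroup.index_ne_zero_iff_finite.mpr (K'.quotient_finite_of_isOpen hK'))
  rw [Subgroup.index_range_subtype_comp_mulEquiv_comp_inclusion, ← Subgroup.relIndex_mul_index hKK']
  push_cast
  exact div_mul_eq_div_mul_mul_div _ _ _ _ hK'_index

/-- The index ratio of a profinite group is multiplicative: if `θ : H ≃ K` and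
`ψ : K' ≃ L` are (continuous) isomorphisms between open subgroups with `K ≤ K'`, then the
index ratio of the composite equals the product of the index ratios. -/
theorem stmt13 {G : Type*} [Group G] [TopologicalSpace G] [IsTopologicalGroup G]
    [CompactSpace G] [T2Space G] [TotallyDisconnectedSpace G]
    (H K K' L : Subgroup G)
    (hH : IsOpen (H : Set G)) (hK : IsOpen (K : Set G))
    (hK' : IsOpen (K' : Set G)) (hL : IsOpen (L : Set G))
    (θ : ↥H ≃* ↥K) (ψ : ↥K' ≃* ↥L)
    (hθ : Continuous θ) (hψ : Continuous ψ) (hKK' : K ≤ K') :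
    ((H.index : ℚ) /
        ((MonoidHom.range (L.subtype.comp (ψ.toMonoidHom.comp
          ((Subgroup.inclusion hKK').comp θ.toMonoidHom)))).index : ℚ)) =
      ((H.index : ℚ) / (K.index : ℚ)) * ((K'.index : ℚ) / (L.index : ℚ)) :=
  stmt13_general H K K' L hK' θ ψ hKK'
end

section
/- Let G be a finite group acting faithfully and primitively on a finite set Ω, and let H be a normal subgroup of G. Then the Frattini subgroup of H is trivial: Φ(H) = 1. -/
/-!
The Frattini subgroup of a normal subgroup `H ≤ G` is characteristic in `H`, hence normal in `G`;
if it escaped a maximal subgroup `M` of `G` it would supplement `M`, and by Dedekind's law also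
`H ∩ M` inside `H`; being non-generating in `H`, this forces `H ≤ M`. So `Φ(H) ≤ Φ(G)`. In a primitive group every point
stabiliser is maximal, so `Φ(G)` fixes every point and is trivial by faithfulness.
-/

open Subgroup

namespace Subgroup

variable {G : Type*} [Group G]

lemma normal_sup_inf_eq_of_sup_eq_top {N M H : Subgroup G} [N.Normal] (hNH : N ≤ H)
    (hNM : N ⊔ M = ⊤) : N ⊔ M ⊓ H = H := by
  apply SetLike.coe_injective
  rw [normal_mul, mul_inf_assoc N M H hNH, ← normal_mul, hNM, coe_top, Set.univ_inter]

lemma map_frattini_le_frattini_of_normal (H : Subgroup G) [H.Normal]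
    [IsCoatomic (Subgroup H)] : (frattini H).map H.subtype ≤ frattini G := by
  set F := (frattini H).map H.subtype
  have hFH : F ≤ H := map_subtype_le _
  refine le_iInf₂ fun M hM => ?_
  by_contra hFM
  have hFM_top : F ⊔ M = ⊤ := hM.2 _ (right_lt_sup.mpr hFM)
  have hHM : H ≤ M := by
    rw [← subgroupOf_eq_top]
    refine frattini_nongenerating (map_injective H.subtype_injective ?_)
    rw [Subgroup.map_sup, subgroupOf_map_subtype, ← MonoidHom.range_eq_map, range_subtype, sup_comm,
      normal_sup_inf_eq_of_sup_eq_top hFH hFM_top]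
  exact hFM (hFH.trans hHM)

end Subgroup

lemma frattini_eq_bot_of_isCoatom_stabilizer {G Ω : Type*} [Group G] [MulAction G Ω]
    [FaithfulSMul G Ω] (hmax : ∀ ω : Ω, IsCoatom (MulAction.stabilizer G ω)) :
    frattini G = ⊥ := by
  refine (eq_bot_iff_forall _).mpr fun g hg => eq_of_smul_eq_smul (α := Ω) fun ω => ?_
  rw [one_smul]
  exact frattini_le_coatom (hmax ω) hg

theorem stmt14_general {G Ω : Type*} [Group G] [Finite G]
    [MulAction G Ω] [FaithfulSMul G Ω]
    (hprim : ∀ ω : Ω, IsCoatom (MulAction.stabilizer G ω))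
    (H : Subgroup G) (hH : H.Normal) :
    frattini ↥H = ⊥ := by
  rw [← map_eq_bot_iff_of_injective _ H.subtype_injective, eq_bot_iff,
    ← frattini_eq_bot_of_isCoatom_stabilizer hprim]
  exact map_frattini_le_frattini_of_normal H

/-- Let `G` be a finite group acting faithfully and primitively (transitively, with maximal
point stabilisers) on a finite nonempty set `Ω`, and let `H` be a normal subgroup of `G`.
Then the Frattini subgroup of `H` is trivial. -/
theorem stmt14 {G Ω : Type*} [Group G] [Finite G] [Finite Ω] [Nonempty Ω]
    [MulAction G Ω] [FaithfulSMul G Ω]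
    (htrans : MulAction.IsPretransitive G Ω)
    (hprim : ∀ ω : Ω, IsCoatom (MulAction.stabilizer G ω))
    (H : Subgroup G) (hH : H.Normal) :
    frattini ↥H = ⊥ :=
  stmt14_general hprim H hH
end

section
/- Let G be a finite group, H a subgroup of G of index h, t the index of the normal core of H in G, and for a positive integer n let I_n(G) denote the intersection of all normal subgroups of G of index at most n. Then I_n(G) ≥ I_n(H) ≥ I_{t·n^h}(G), where I_n(H) is the intersection of all normal subgroups of H of index at most n in H. -/
/-!
A normal subgroup `N` of `G` of index at most `n` cuts out `N ∩ H`, normal in `H` of index at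
most `n`. Conversely, let `L` be normal in `H` of index at most `n` and `C` the core of `H`.
Since `H` normalizes `L`, the core of `L` in `G` is the intersection of the `h = |G : H|`
conjugates `gLg⁻¹`, one per coset `gH`. Each meets the normal subgroup `C` in a subgroup of
index `|C : C ∩ L| ≤ |H : L| ≤ n`, so the core of `L` has index at most `n ^ h` in `C`, hence
at most `t * n ^ h` in `G`, and it contains `I_{t n^h}(G)`.
-/

namespace Subgroup

variable {G : Type*} [Group G]

theorem relIndex_map_conj (M K : Subgroup G) [K.Normal] (g : G) :
    (M.map (MulAut.conj g)).relIndex K = M.relIndex K := by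
  conv_lhs => rw [← Normal.map_conj_eq K g]
  exact relIndex_map_map_of_injective M K (MulAut.conj g).injective

/-- Since `H` normalizes `M`, the conjugate of `M` by `g` only depends on the coset `gH`. -/
theorem normalCore_eq_iInf_map_conj_out {M H : Subgroup G} (hH : H ≤ normalizer (M : Set G)) :
    M.normalCore = ⨅ q : G ⧸ H, M.map (MulAut.conj q.out) := by
  rw [normalCore_eq_iInf_map_conj]
  refine le_antisymm (le_iInf fun q => iInf_le _ _)
    (le_iInf fun g => iInf_le_of_le (g : G ⧸ H) ?_)
  obtain ⟨h, hout⟩ := QuotientGroup.mk_out_eq_mul H g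
  conv_rhs => rw [← mem_normalizer_iff_map_conj_eq.mp (hH h.2)]
  simp [hout, map_map, MulAut.mul_def]

theorem relIndex_normalCore_le_pow {M H K : Subgroup G} [K.Normal] [H.FiniteIndex]
    (hH : H ≤ normalizer (M : Set G)) : M.normalCore.relIndex K ≤ M.relIndex K ^ H.index := by
  have := Fintype.ofFinite (G ⧸ H)
  calc M.normalCore.relIndex K
      ≤ ∏ q : G ⧸ H, (M.map (MulAut.conj q.out)).relIndex K := by
        rw [normalCore_eq_iInf_map_conj_out hH]; exact relIndex_iInf_le _
    _ = M.relIndex K ^ H.index := by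
        simp only [relIndex_map_conj, Finset.prod_const, Finset.card_univ, index,
          Nat.card_eq_fintype_card]

theorem index_normalCore_map_subtype_le {H : Subgroup G} [H.FiniteIndex] (L : Subgroup H)
    [L.Normal] [L.FiniteIndex] :
    (L.map H.subtype).normalCore.index ≤ H.normalCore.index * L.index ^ H.index := by
  set L' := L.map H.subtype
  have hL' : L'.subgroupOf H = L := comap_map_eq_self_of_injective H.subtype_injective L
  have : (L'.subgroupOf H).Normal := hL' ▸ inferInstance
  have hnorm : H ≤ normalizer (L' : Set G) :=
    le_normalizer_of_normal_subgroupOf (map_subtype_le L)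
  have hrel : L'.relIndex H = L.index := congrArg index hL'
  calc L'.normalCore.index = L'.normalCore.relIndex H.normalCore * H.normalCore.index :=
        (relIndex_mul_index (normalCore_mono (map_subtype_le L))).symm
    _ ≤ L'.relIndex H.normalCore ^ H.index * H.normalCore.index := by
        gcongr; exact relIndex_normalCore_le_pow hnorm
    _ ≤ L.index ^ H.index * H.normalCore.index := by
        gcongr
        exact hrel ▸ relIndex_le_of_le_right H.normalCore_le (hrel ▸ FiniteIndex.index_ne_zero)
    _ = H.normalCore.index * L.index ^ H.index := mul_comm _ _

theorem le_map_subtype_sInf {H X : Subgroup G} {S : Set (Subgroup H)} (hX : X ≤ H)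
    (hS : ∀ L ∈ S, X ≤ L.map H.subtype) : X ≤ (sInf S).map H.subtype := by
  rw [← map_subgroupOf_eq_of_le hX]
  refine map_mono (le_sInf fun L hL => ?_)
  rw [← map_le_map_iff_of_injective H.subtype_injective, map_subgroupOf_eq_of_le hX]
  exact hS L hL

end Subgroup

/-- Let `G` be a finite group, `H ≤ G` of index `h`, `t` the index of the normal core of
`H`, and `I_n(G)` the intersection of all normal subgroups of index at most `n`.  Then
`I_n(G) ≥ I_n(H) ≥ I_{t·n^h}(G)`. -/
theorem stmt18 {G : Type*} [Group G] [Finite G] (H : Subgroup G) (n : ℕ) (hn : 0 < n) :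
    (sInf {N : Subgroup ↥H | N.Normal ∧ N.index ≤ n}).map H.subtype ≤
        sInf {N : Subgroup G | N.Normal ∧ N.index ≤ n} ∧
      sInf {N : Subgroup G | N.Normal ∧ N.index ≤ H.normalCore.index * n ^ H.index} ≤
        (sInf {N : Subgroup ↥H | N.Normal ∧ N.index ≤ n}).map H.subtype := by
  constructor
  · refine le_sInf fun N ⟨hN, hNn⟩ => ?_
    have hrel : N.relIndex H ≤ N.index :=
      N.relIndex_top_right ▸ Subgroup.relIndex_le_of_le_right le_top
        (by simp [Subgroup.FiniteIndex.index_ne_zero])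
    calc (sInf {N : Subgroup ↥H | N.Normal ∧ N.index ≤ n}).map H.subtype
        ≤ (N.subgroupOf H).map H.subtype :=
          Subgroup.map_mono (sInf_le ⟨inferInstance, hrel.trans hNn⟩)
      _ = N ⊓ H := Subgroup.subgroupOf_map_subtype N H
      _ ≤ N := inf_le_left
  · refine Subgroup.le_map_subtype_sInf ?_ fun L ⟨hL, hLn⟩ => ?_
    · have ht : H.normalCore.index ≤ H.normalCore.index * n ^ H.index :=
        Nat.le_mul_of_pos_right _ (pow_pos hn _)
      exact le_trans (sInf_le ⟨H.normalCore_normal, ht⟩) H.normalCore_le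
    · refine le_trans (sInf_le ⟨Subgroup.normalCore_normal _, ?_⟩) (Subgroup.normalCore_le _)
      calc _ ≤ H.normalCore.index * L.index ^ H.index :=
            Subgroup.index_normalCore_map_subtype_le L
        _ ≤ H.normalCore.index * n ^ H.index := by gcongr
end
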